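/- Let F be the skew-symmetric bilinear form on g(a₁,a₂,a₃,a₄) determined by F(X₁,X₂) = 1, F(X₃,X₄) = −1, and F(X_i,X_j) = 0 for all other pairs i < j. Then F([X,Y],Z) + F([Y,Z],X) + F([Z,X],Y) = 0 for all X,Y,Z ∈ g(a₁,a₂,a₃,a₄); that is, F is a 2-cocycle on the Lie algebra. (This is the Lie-algebra form of Theorem 3(b): the left-invariant 2-form F = e₁∧e₂ − e₃∧e₄ on the Lie group G(a₁,a₂,a₃,a₄) is closed.) -/
import Mathlib


open scoped Matrix

/-- The Lie bracket of the 6-dimensional Lie algebra `g(a₁,a₂,a₃,a₄)` of Puhle's paper,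
written on `ℝ⁶` with the basis `X₁,…,X₆` corresponding to the 0-based coordinates `0,…,5`.
Here `p = 2a₁+a₃`, `q = 2a₂+a₄`, `r = a₁−a₃`, `s = a₂−a₄`,
`α = −2(rp + sq)`, and the bracket is determined by `[X₆,X₁]=X₂`, `[X₆,X₂]=−X₁`,
`[X₆,X₃]=−X₄`, `[X₆,X₄]=X₃`, `[X₁,X₅]=−p·X₃−q·X₄`, `[X₂,X₅]=−q·X₃+p·X₄`,
`[X₃,X₅]=p·X₁+q·X₂`, `[X₄,X₅]=q·X₁−p·X₂`, `[X₁,X₃]=2r·X₅`, `[X₂,X₄]=−2r·X₅`,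
`[X₁,X₄]=2s·X₅`, `[X₂,X₃]=2s·X₅`, `[X₁,X₂]=−α·X₆`, `[X₃,X₄]=α·X₆`,
all other brackets of basis vectors being zero. -/
def gBracket (a₁ a₂ a₃ a₄ : ℝ) (x y : Fin 6 → ℝ) : Fin 6 → ℝ :=
  let p := 2 * a₁ + a₃
  let q := 2 * a₂ + a₄
  let r := a₁ - a₃
  let s := a₂ - a₄
  let α := -2 * (r * p + s * q)
  let w : Fin 6 → Fin 6 → ℝ := fun i j => x i * y j - x j * y i
  ![p * w 2 4 + q * w 3 4 + w 1 5,
    q * w 2 4 - p * w 3 4 - w 0 5,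
    -(p * w 0 4) - q * w 1 4 - w 3 5,
    -(q * w 0 4) + p * w 1 4 + w 2 5,
    2 * r * (w 0 2 - w 1 3) + 2 * s * (w 0 3 + w 1 2),
    -(α * w 0 1) + α * w 2 3]

/-- The skew-symmetric bilinear form `F = e₁∧e₂ − e₃∧e₄` on `g(a₁,a₂,a₃,a₄)`, determined by
`F(X₁,X₂) = 1`, `F(X₃,X₄) = −1` and `F(Xᵢ,Xⱼ) = 0` for the remaining pairs `i < j`. -/
def Fform (x y : Fin 6 → ℝ) : ℝ :=
  (x 0 * y 1 - x 1 * y 0) - (x 2 * y 3 - x 3 * y 2)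

/-- For `a₁a₄ = a₂a₃`, the form `F` is a 2-cocycle on the Lie algebra `g(a₁,a₂,a₃,a₄)`:
`F([X,Y],Z) + F([Y,Z],X) + F([Z,X],Y) = 0` for all `X, Y, Z`.  (Lie-algebra form of
Theorem 3(b) of Puhle's paper: the left-invariant 2-form `F = e₁∧e₂ − e₃∧e₄` is closed.) -/
theorem Fform_is_cocycle (a₁ a₂ a₃ a₄ : ℝ) (h : a₁ * a₄ = a₂ * a₃) :
    ∀ x y z : Fin 6 → ℝ,
      Fform (gBracket a₁ a₂ a₃ a₄ x y) z
        + Fform (gBracket a₁ a₂ a₃ a₄ y z) x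
        + Fform (gBracket a₁ a₂ a₃ a₄ z x) y = 0 := by
  intro x y z
  simp only [gBracket, Fform, Matrix.cons_val_zero, Matrix.cons_val_one, Matrix.head_cons,
    Matrix.cons_val_two, Matrix.tail_cons, Matrix.cons_val_three]
  ring
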